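/- arXiv:2004.13381 — 5 statements merged into one kernel-verified Lean document; each statement's English description precedes it below -/
import Mathlib

section
/- Let Ω be a convex domain in ℝ^N with Ω ≠ ℝ^N, let I be an interval in ℝ with nonempty interior, and let F be admissible on I. Then F-concavity is nontrivial in Ω; that is, there exists a nonconstant F-concave function in Ω. -/
open Set

/-!
Separate a point outside `Ω` from `Ω` by a continuous linear functional `φ`: then
`min 1 ((φ p - φ z) / (φ p - φ x₀))` (for `p ∉ Ω`, `x₀ ∈ Ω`) is a concave function on `Ω` with values
in `[0, 1]`, nonconstant because `φ` has no local maximum on the open set `Ω`. Rescale it into a real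
interval `[a, b]` contained in the range of `F` (intermediate value theorem on a subinterval of the
interior of `I`), and compose with a right inverse of `F`: the result `f` has `F ∘ f` concave.
-/

/-- `f : Ω → ℝ` (with values in the domain of `F`) is `F`-concave in `Ω`, where
`F : ℝ → EReal` plays the role of an admissible function `F : I → ℝ ∪ {-∞}`. -/
def FConcaveOn {N : ℕ} (Ω : Set (EuclideanSpace ℝ (Fin N))) (F : ℝ → EReal)
    (f : EuclideanSpace ℝ (Fin N) → ℝ) : Prop :=
  ∀ x ∈ Ω, ∀ y ∈ Ω, ∀ μ ∈ Set.Icc (0 : ℝ) 1,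
    ((1 - μ : ℝ) : EReal) * F (f x) + ((μ : ℝ) : EReal) * F (f y)
      ≤ F (f ((1 - μ) • x + μ • y))

section

variable {E : Type*} [NormedAddCommGroup E] [NormedSpace ℝ E] {s : Set E}

theorem IsOpen.exists_mem_lt_apply (hs : IsOpen s) {x : E} (hx : x ∈ s) {φ : E →L[ℝ] ℝ}
    (hφ : φ ≠ 0) : ∃ y ∈ s, φ x < φ y := by
  by_contra! h
  have hmax : IsLocalMax φ x := Filter.mem_of_superset (hs.mem_nhds hx) h
  exact hφ (hmax.hasFDerivAt_eq_zero φ.hasFDerivAt)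

theorem Convex.exists_concaveOn_mapsTo_Icc (hs : Convex ℝ s) (hs_open : IsOpen s)
    (hs_ne : s.Nonempty) (hs_univ : s ≠ univ) {a b : ℝ} (hab : a < b) :
    ∃ g : E → ℝ, ConcaveOn ℝ s g ∧ MapsTo g s (Icc a b) ∧ ∃ x ∈ s, ∃ y ∈ s, g x ≠ g y := by
  obtain ⟨p, hp⟩ := nonempty_compl.2 hs_univ
  obtain ⟨φ, hφ⟩ := geometric_hahn_banach_open_point hs hs_open hp
  obtain ⟨x₀, hx₀⟩ := hs_ne
  have hc : 0 < φ p - φ x₀ := sub_pos.2 (hφ x₀ hx₀)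
  set ψ : E →L[ℝ] ℝ := (φ p - φ x₀)⁻¹ • φ
  have hψ : ∀ z ∈ s, 0 < ψ p - ψ z := fun z hz => by
    simpa [ψ, ← mul_sub] using mul_pos (inv_pos.2 hc) (sub_pos.2 (hφ z hz))
  have hψx₀ : ψ p - ψ x₀ = 1 := by simp [ψ, ← mul_sub, hc.ne']
  have hψ0 : ψ ≠ 0 := fun h => by simp [h] at hψx₀
  obtain ⟨x₁, hx₁, hlt⟩ := hs_open.exists_mem_lt_apply hx₀ hψ0
  have hconc : ConcaveOn ℝ s (fun z => (b - a) * min 1 (ψ p - ψ z) + a) :=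
    (((concaveOn_const 1 hs).inf ((concaveOn_const (ψ p) hs).sub
      (ψ.toLinearMap.convexOn hs))).smul (sub_nonneg.2 hab.le)).add_const a
  refine ⟨_, hconc, fun z hz => ⟨?_, ?_⟩, x₀, hx₀, x₁, hx₁, ?_⟩
  · nlinarith [lt_min one_pos (hψ z hz)]
  · nlinarith [min_le_left 1 (ψ p - ψ z)]
  · have : min 1 (ψ p - ψ x₁) < 1 := min_lt_of_right_lt (by linarith)
    simp only [hψx₀, min_self]
    intro h
    nlinarith

end

theorem exists_real_Icc_subset_image {I : Set ℝ} (hI : (interior I).Nonempty) {F : ℝ → EReal}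
    (hF_cont : ContinuousOn F (interior I)) (hF_mono : StrictMonoOn F I) :
    ∃ a b : ℝ, a < b ∧ ∀ r ∈ Icc a b, (r : EReal) ∈ F '' I := by
  obtain ⟨c, d, hcd, hI_sub⟩ := isOpen_interior.exists_Ioo_subset hI
  obtain ⟨t₀, hct₀, ht₀d⟩ := exists_between hcd
  obtain ⟨t₁, ht₀₁, ht₁d⟩ := exists_between ht₀d
  have hmem₀ : t₀ ∈ Ioo c d := ⟨hct₀, ht₀d⟩
  have hmem₁ : t₁ ∈ Ioo c d := ⟨hct₀.trans ht₀₁, ht₁d⟩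
  have hF₀₁ : F t₀ < F t₁ :=
    hF_mono (interior_subset (hI_sub hmem₀)) (interior_subset (hI_sub hmem₁)) ht₀₁
  obtain ⟨a, hF₀a, hF₁a⟩ := EReal.lt_iff_exists_real_btwn.1 hF₀₁
  obtain ⟨b, hab, hF₁b⟩ := EReal.lt_iff_exists_real_btwn.1 hF₁a
  refine ⟨a, b, EReal.coe_lt_coe_iff.1 hab, fun r hr => ?_⟩
  have hIVT := isPreconnected_Ioo.intermediate_value hmem₀ hmem₁ (hF_cont.mono hI_sub)
  refine image_mono (hI_sub.trans interior_subset) (hIVT ⟨?_, ?_⟩)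
  · exact hF₀a.le.trans (EReal.coe_le_coe_iff.2 hr.1)
  · exact (EReal.coe_le_coe_iff.2 hr.2).trans hF₁b.le

theorem FConcaveOn.of_concaveOn {N : ℕ} {Ω : Set (EuclideanSpace ℝ (Fin N))} {F : ℝ → EReal}
    {f h : EuclideanSpace ℝ (Fin N) → ℝ} (hh : ConcaveOn ℝ Ω h)
    (hFf : ∀ x ∈ Ω, F (f x) = h x) : FConcaveOn Ω F f := by
  intro x hx y hy μ hμ
  rw [hFf x hx, hFf y hy, hFf _ (hh.1 hx hy (sub_nonneg.2 hμ.2) hμ.1 (sub_add_cancel 1 μ))]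
  exact_mod_cast hh.2 hx hy (sub_nonneg.2 hμ.2) hμ.1 (sub_add_cancel 1 μ)

theorem stmt_0_general {N : ℕ} (Ω : Set (EuclideanSpace ℝ (Fin N)))
    (hΩopen : IsOpen Ω) (hΩconv : Convex ℝ Ω) (hΩne : Ω.Nonempty) (hΩproper : Ω ≠ univ)
    (I : Set ℝ) (hIint : (interior I).Nonempty)
    (F : ℝ → EReal) (hFcont : ContinuousOn F (interior I)) (hFmono : StrictMonoOn F I) :
    ∃ f : EuclideanSpace ℝ (Fin N) → ℝ,
      (∀ x ∈ Ω, f x ∈ I) ∧ FConcaveOn Ω F f ∧ ∃ x ∈ Ω, ∃ y ∈ Ω, f x ≠ f y := by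
  obtain ⟨a, b, hab, hFI⟩ := exists_real_Icc_subset_image hIint hFcont hFmono
  obtain ⟨h, hh, hh_maps, x, hx, y, hy, hxy⟩ :=
    hΩconv.exists_concaveOn_mapsTo_Icc hΩopen hΩne hΩproper hab
  have hF_inv : ∀ z ∈ Ω, ∃ t ∈ I, F t = h z := fun z hz => hFI _ (hh_maps hz)
  refine ⟨fun z => Function.invFunOn F I (h z), fun z hz => Function.invFunOn_mem (hF_inv z hz),
    FConcaveOn.of_concaveOn hh fun z hz => Function.invFunOn_eq (hF_inv z hz),
    x, hx, y, hy, fun hfxy => hxy ?_⟩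
  have hFxy := congrArg F hfxy
  rwa [Function.invFunOn_eq (hF_inv x hx), Function.invFunOn_eq (hF_inv y hy),
    EReal.coe_eq_coe_iff] at hFxy

/-- If `Ω ⊊ ℝ^N` is a convex domain and `F` is admissible on an interval `I` with nonempty
interior, then `F`-concavity is nontrivial in `Ω`: there is a nonconstant `F`-concave function. -/
theorem stmt_0 {N : ℕ} (Ω : Set (EuclideanSpace ℝ (Fin N)))
    (hΩopen : IsOpen Ω) (hΩconv : Convex ℝ Ω) (hΩne : Ω.Nonempty) (hΩproper : Ω ≠ univ)
    (I : Set ℝ) (hIconn : I.OrdConnected) (hIint : (interior I).Nonempty)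
    (F : ℝ → EReal) (hFcont : ContinuousOn F (interior I)) (hFmono : StrictMonoOn F I) :
    ∃ f : EuclideanSpace ℝ (Fin N) → ℝ,
      (∀ x ∈ Ω, f x ∈ I) ∧ FConcaveOn Ω F f ∧ ∃ x ∈ Ω, ∃ y ∈ Ω, f x ≠ f y :=
  stmt_0_general Ω hΩopen hΩconv hΩne hΩproper I hIint F hFcont hFmono
end

section
/- Let Ω be a convex domain in ℝ^N and let F₁ and F₂ be admissible on an open interval I such that F₁-concavity is nontrivial in Ω. Then C_Ω[F₁] = C_Ω[F₂] if and only if there exist A ∈ (0,∞) and B ∈ ℝ such that F₁(τ) = A·F₂(τ) + B for all τ ∈ I. -/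
open Set

/-- `f : Ω → ℝ` is `F`-concave in `Ω`, for a real-valued `F`. -/
def FConcaveOnR {N : ℕ} (Ω : Set (EuclideanSpace ℝ (Fin N))) (F : ℝ → ℝ)
    (f : EuclideanSpace ℝ (Fin N) → ℝ) : Prop :=
  ∀ x ∈ Ω, ∀ y ∈ Ω, ∀ μ ∈ Set.Icc (0 : ℝ) 1,
    (1 - μ) * F (f x) + μ * F (f y) ≤ F (f ((1 - μ) • x + μ • y))

/-!
Put `J = F₁ '' I` and `Φ = F₂ ∘ F₁⁻¹ : J → ℝ`. For `p ≤ q` in `J`, take an affine `h` that is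
bounded below on `Ω` by a point of `J` and takes the values `p` and `q` at some `x, y ∈ Ω`. Then
`min q h` is concave with values in `J` and affine on the segment `[x, y]`, so `F₁⁻¹ ∘ min q h`
is `F₁`-concave; being also `F₂`-concave, evaluated on `[x, y]` it shows that `Φ` is concave.
Exchanging `F₁` and `F₂` shows that `Φ⁻¹` is concave, i.e. that `Φ` is convex; so `Φ` is affine.

If `J` is unbounded below, any nonconstant affine `h` can be rescaled to do. If `J` is bounded
below, then `Ω ≠ ℝᴺ`, because a concave function bounded below on the whole space is constant
while `F₁ ∘ f` is not, for a nonconstant `F₁`-concave `f`; a functional separating `Ω` from an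
outside point is then bounded below on `Ω`, and a rescaling of it does.
-/

open Filter Topology

theorem ConcaveOn.eq_of_bddBelow_range {E : Type*} [AddCommGroup E] [Module ℝ E] {g : E → ℝ}
    (hg : ConcaveOn ℝ univ g) (hb : BddBelow (range g)) (x y : E) : g x = g y := by
  obtain ⟨a, ha⟩ := hb
  suffices hle : ∀ x y, g x ≤ g y from le_antisymm (hle x y) (hle y x)
  intro x y
  by_contra! hlt
  -- `y` divides the segment from `x` to a far point `z` in the ratio `s : 1 - s`, and
  -- concavity then forces `g z < a`
  obtain ⟨s, hs⟩ : ∃ s, s = (g x - g y) / (g x - g y + (g x - a)) := ⟨_, rfl⟩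
  have hax : a ≤ g x := ha (mem_range_self x)
  have hs0 : 0 < s := hs ▸ div_pos (by linarith) (by linarith)
  have hs1 : s ≤ 1 := hs ▸ (div_le_one (by linarith)).2 (by linarith)
  have hsd : s * (g x - g y + (g x - a)) = g x - g y := by
    rw [hs, div_mul_cancel₀ _ (by linarith)]
  set z := x + s⁻¹ • (y - x)
  have hy : (1 - s) • x + s • z = y := by
    simp only [z, smul_add, smul_smul, mul_inv_cancel₀ hs0.ne', one_smul]
    module
  have hconc := hg.2 (mem_univ x) (mem_univ z) (sub_nonneg.2 hs1) hs0.le (sub_add_cancel 1 s)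
  rw [hy, smul_eq_mul, smul_eq_mul] at hconc
  have haz : a ≤ g z := ha (mem_range_self z)
  nlinarith [mul_le_mul_of_nonneg_left haz hs0.le]

theorem exists_affine_hits_of_bddBelow {S : Set ℝ} (hS : S.OrdConnected) (hSb : BddBelow S)
    {c₁ c₂ : ℝ} (hc₁ : c₁ ∈ S) (hc₂ : c₂ ∈ S) (hc : c₁ < c₂) {b p q : ℝ} (hbp : b < p)
    (hpq : p ≤ q) :
    ∃ α β : ℝ, (∃ s ∈ S, α * s + β = p) ∧ (∃ s ∈ S, α * s + β = q) ∧
      ∀ s ∈ S, b ≤ α * s + β := by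
  -- the increasing affine map sending `sInf S` to `b` and `c₂` to `q`
  set m := sInf S
  have hm : m < c₂ := (csInf_le hSb hc₁).trans_lt hc
  set α := (q - b) / (c₂ - m)
  have hα : 0 < α := div_pos (by linarith) (by linarith)
  have hαc : α * (c₂ - m) = q - b := div_mul_cancel₀ _ (by linarith)
  refine ⟨α, b - α * m, ?_, ⟨c₂, hc₂, by linarith⟩, fun s hs => ?_⟩
  · set t := m + (p - b) / α
    have hαt : α * (t - m) = p - b := by simp only [t]; field_simp; ring
    obtain ⟨s, hs, hst⟩ := exists_lt_of_csInf_lt ⟨c₁, hc₁⟩ (show m < t by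
      simp only [t]; have := div_pos (sub_pos.2 hbp) hα; linarith)
    refine ⟨t, hS.out hs hc₂ ⟨hst.le, ?_⟩, by linarith⟩
    nlinarith
  · nlinarith [csInf_le hSb hs]

theorem StrictMonoOn.exists_lt_mem_image {I : Set ℝ} (hI : IsOpen I) {F : ℝ → ℝ}
    (hF : StrictMonoOn F I) {p : ℝ} (hp : p ∈ F '' I) : ∃ b ∈ F '' I, b < p := by
  obtain ⟨s, hs, rfl⟩ := hp
  obtain ⟨l, hl, hlI⟩ := exists_Ioc_subset_of_mem_nhds (hI.mem_nhds hs) (exists_lt s)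
  obtain ⟨s', hls', hs's⟩ := exists_between hl
  exact ⟨F s', mem_image_of_mem F (hlI ⟨hls', hs's.le⟩), hF (hlI ⟨hls', hs's.le⟩) hs hs's⟩

section NormedSpace

variable {E : Type*} [NormedAddCommGroup E] [NormedSpace ℝ E] {Ω : Set E}

theorem exists_dual_bddBelow_image_of_ne_univ (hΩo : IsOpen Ω) (hΩc : Convex ℝ Ω)
    (hΩ : Ω ≠ univ) {x₀ : E} (hx₀ : x₀ ∈ Ω) :
    ∃ ℓ : StrongDual ℝ E, BddBelow (ℓ '' Ω) ∧ ∃ x ∈ Ω, ℓ x₀ < ℓ x := by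
  obtain ⟨z, hz⟩ := (ne_univ_iff_exists_notMem Ω).1 hΩ
  obtain ⟨ξ, hξ⟩ := geometric_hahn_banach_open_point hΩc hΩo hz
  refine ⟨-ξ, ⟨-ξ z, ?_⟩, ?_⟩
  · rintro _ ⟨w, hw, rfl⟩
    simpa using (hξ w hw).le
  have hpath : Tendsto (fun t : ℝ => x₀ + t • (x₀ - z)) (𝓝[>] 0) (𝓝 x₀) := by
    have hcont : Continuous (fun t : ℝ => x₀ + t • (x₀ - z)) := by fun_prop
    simpa using (hcont.tendsto 0).mono_left nhdsWithin_le_nhds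
  obtain ⟨t, htΩ, ht⟩ := ((hpath.eventually (hΩo.mem_nhds hx₀)).and self_mem_nhdsWithin).exists
  refine ⟨_, htΩ, ?_⟩
  have hgain := mul_pos (show (0 : ℝ) < t from ht) (sub_pos.2 (hξ x₀ hx₀))
  simp only [neg_apply, map_add, map_smul, map_sub, smul_eq_mul]
  linarith

theorem exists_dual_add_const_hits (hΩo : IsOpen Ω) (hΩc : Convex ℝ Ω) {J : Set ℝ}
    (hJ : ∀ p ∈ J, ∃ b ∈ J, b < p) {g₀ : E → ℝ} (hg₀ : ConcaveOn ℝ Ω g₀) (hg₀J : MapsTo g₀ Ω J)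
    {x₀ y₀ : E} (hx₀ : x₀ ∈ Ω) (hy₀ : y₀ ∈ Ω) (hne : g₀ x₀ ≠ g₀ y₀) {p q : ℝ} (hp : p ∈ J)
    (hpq : p ≤ q) :
    ∃ (ℓ : StrongDual ℝ E) (β : ℝ), (∃ x ∈ Ω, ℓ x + β = p) ∧ (∃ y ∈ Ω, ℓ y + β = q) ∧
      ∀ w ∈ Ω, ∃ b ∈ J, b ≤ ℓ w + β := by
  by_cases hJb : BddBelow J
  · have hΩ : Ω ≠ univ := by
      rintro rfl
      exact hne <| hg₀.eq_of_bddBelow_range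
        (hJb.mono (range_subset_iff.2 fun x => hg₀J (mem_univ x))) x₀ y₀
    obtain ⟨ℓ, hℓb, x, hx, hlt⟩ := exists_dual_bddBelow_image_of_ne_univ hΩo hΩc hΩ hx₀
    obtain ⟨b, hb, hbp⟩ := hJ p hp
    obtain ⟨α, β, ⟨_, ⟨x, hx, rfl⟩, hxp⟩, ⟨_, ⟨y, hy, rfl⟩, hyq⟩, hlow⟩ :=
      exists_affine_hits_of_bddBelow (hΩc.linear_image (ℓ : E →ₗ[ℝ] ℝ)).ordConnected
        hℓb (mem_image_of_mem ℓ hx₀) (mem_image_of_mem ℓ hx) hlt hbp hpq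
    exact ⟨α • ℓ, β, ⟨x, hx, hxp⟩, ⟨y, hy, hyq⟩,
      fun w hw => ⟨b, hb, hlow _ (mem_image_of_mem ℓ hw)⟩⟩
  · obtain ⟨ℓ, hℓ⟩ :=
      SeparatingDual.exists_separating_of_ne (R := ℝ) fun h => hne (congrArg g₀ h)
    set α := (q - p) / (ℓ y₀ - ℓ x₀)
    have hα : α * (ℓ y₀ - ℓ x₀) = q - p := div_mul_cancel₀ _ (sub_ne_zero.2 hℓ.symm)
    refine ⟨α • ℓ, p - α * ℓ x₀, ⟨x₀, hx₀, ?_⟩, ⟨y₀, hy₀, ?_⟩, fun w _ => ?_⟩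
    · simp
    · simp only [smul_apply, smul_eq_mul]; linarith
    · obtain ⟨b, hb, hlt⟩ := not_bddBelow_iff.1 hJb (α • ℓ w + (p - α * ℓ x₀))
      exact ⟨b, hb, hlt.le⟩

theorem exists_concaveOn_affine_on_segment (hΩo : IsOpen Ω) (hΩc : Convex ℝ Ω) {J : Set ℝ}
    (hJc : J.OrdConnected) (hJ : ∀ p ∈ J, ∃ b ∈ J, b < p) {g₀ : E → ℝ}
    (hg₀ : ConcaveOn ℝ Ω g₀) (hg₀J : MapsTo g₀ Ω J) {x₀ y₀ : E} (hx₀ : x₀ ∈ Ω) (hy₀ : y₀ ∈ Ω)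
    (hne : g₀ x₀ ≠ g₀ y₀) {p q : ℝ} (hp : p ∈ J) (hq : q ∈ J) (hpq : p ≤ q) :
    ∃ g : E → ℝ, ConcaveOn ℝ Ω g ∧ MapsTo g Ω J ∧
      ∃ x ∈ Ω, ∃ y ∈ Ω, ∀ μ ∈ Icc (0 : ℝ) 1, g ((1 - μ) • x + μ • y) = (1 - μ) * p + μ * q := by
  obtain ⟨ℓ, β, ⟨x, hx, hxp⟩, ⟨y, hy, hyq⟩, hlow⟩ :=
    exists_dual_add_const_hits hΩo hΩc hJ hg₀ hg₀J hx₀ hy₀ hne hp hpq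
  refine ⟨fun w => min q (ℓ w + β),
    (concaveOn_const q hΩc).inf (((ℓ : E →ₗ[ℝ] ℝ).concaveOn hΩc).add_const β), fun w hw => ?_,
    x, hx, y, hy, fun μ hμ => ?_⟩
  · obtain ⟨b, hb, hbw⟩ := hlow w hw
    show min q (ℓ w + β) ∈ J
    rcases le_total q (ℓ w + β) with h | h
    · rwa [min_eq_left h]
    · rw [min_eq_right h]
      exact hJc.out hb hq ⟨hbw, h⟩
  · have hseg : ℓ ((1 - μ) • x + μ • y) + β = (1 - μ) * p + μ * q := by
      simp only [map_add, map_smul, smul_eq_mul, ← hxp, ← hyq]; ring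
    show min q (ℓ ((1 - μ) • x + μ • y) + β) = _
    rw [hseg]
    exact min_eq_right (by nlinarith [hμ.1, hμ.2])

end NormedSpace

section FConcave

variable {N : ℕ} {Ω : Set (EuclideanSpace ℝ (Fin N))} {I : Set ℝ} {F₁ F₂ : ℝ → ℝ}

theorem fConcaveOnR_iff_concaveOn (hΩ : Convex ℝ Ω) {F : ℝ → ℝ}
    {f : EuclideanSpace ℝ (Fin N) → ℝ} : FConcaveOnR Ω F f ↔ ConcaveOn ℝ Ω (F ∘ f) := by
  refine ⟨fun h => ⟨hΩ, fun x hx y hy a b ha hb hab => ?_⟩,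
    fun h x hx y hy μ hμ => h.2 hx hy (sub_nonneg.2 hμ.2) hμ.1 (sub_add_cancel 1 μ)⟩
  obtain rfl : a = 1 - b := by linarith
  exact h x hx y hy b ⟨hb, by linarith⟩

theorem exists_fConcaveOnR_of_concaveOn {F : ℝ → ℝ} {g : EuclideanSpace ℝ (Fin N) → ℝ}
    (hg : ConcaveOn ℝ Ω g) (hgI : MapsTo g Ω (F '' I)) :
    ∃ f, MapsTo f Ω I ∧ FConcaveOnR Ω F f ∧ EqOn (F ∘ f) g Ω := by
  have hFf : EqOn (F ∘ Function.invFunOn F I ∘ g) g Ω :=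
    fun w hw => Function.invFunOn_eq (hgI hw)
  exact ⟨Function.invFunOn F I ∘ g, fun w hw => Function.invFunOn_mem (hgI hw),
    (fConcaveOnR_iff_concaveOn hg.1).2 (hg.congr hFf.symm), hFf⟩

theorem FConcaveOnR.of_eq_mul_add (hΩ : Convex ℝ Ω) {A B : ℝ} (hA : 0 ≤ A)
    (hF : ∀ τ ∈ I, F₁ τ = A * F₂ τ + B) {f : EuclideanSpace ℝ (Fin N) → ℝ}
    (hfI : MapsTo f Ω I) (hf : FConcaveOnR Ω F₂ f) : FConcaveOnR Ω F₁ f := by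
  intro x hx y hy μ hμ
  have hmid : (1 - μ) • x + μ • y ∈ Ω := hΩ hx hy (sub_nonneg.2 hμ.2) hμ.1 (sub_add_cancel 1 μ)
  rw [hF _ (hfI hx), hF _ (hfI hy), hF _ (hfI hmid)]
  linear_combination mul_le_mul_of_nonneg_left (hf x hx y hy μ hμ) hA

theorem exists_eq_combo_of_fConcaveOnR_subset (hΩo : IsOpen Ω) (hΩc : Convex ℝ Ω)
    (hIo : IsOpen I) (hIc : I.OrdConnected) (hF₁c : ContinuousOn F₁ I)
    (hF₁m : StrictMonoOn F₁ I)
    (hsub : ∀ f, MapsTo f Ω I → FConcaveOnR Ω F₁ f → FConcaveOnR Ω F₂ f)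
    {f₀ : EuclideanSpace ℝ (Fin N) → ℝ} (hf₀I : MapsTo f₀ Ω I) (hf₀ : FConcaveOnR Ω F₁ f₀)
    {x₀ y₀ : EuclideanSpace ℝ (Fin N)} (hx₀ : x₀ ∈ Ω) (hy₀ : y₀ ∈ Ω) (hne : f₀ x₀ ≠ f₀ y₀)
    {σ τ : ℝ} (hσ : σ ∈ I) (hτ : τ ∈ I) (hστ : σ ≤ τ) {μ : ℝ} (hμ : μ ∈ Icc (0 : ℝ) 1) :
    ∃ ρ ∈ I, F₁ ρ = (1 - μ) * F₁ σ + μ * F₁ τ ∧ (1 - μ) * F₂ σ + μ * F₂ τ ≤ F₂ ρ := by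
  obtain ⟨g, hg, hgJ, x, hx, y, hy, hgxy⟩ := exists_concaveOn_affine_on_segment hΩo hΩc
    (hIc.isPreconnected.image F₁ hF₁c).ordConnected (fun _ => hF₁m.exists_lt_mem_image hIo)
    ((fConcaveOnR_iff_concaveOn hΩc).1 hf₀) ((mapsTo_image F₁ I).comp hf₀I) hx₀ hy₀
    (fun h => hne (hF₁m.injOn (hf₀I hx₀) (hf₀I hy₀) h)) (mem_image_of_mem F₁ hσ)
    (mem_image_of_mem F₁ hτ) (hF₁m.monotoneOn hσ hτ hστ)
  obtain ⟨f, hfI, hf, hFf⟩ := exists_fConcaveOnR_of_concaveOn hg hgJ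
  have hmid : (1 - μ) • x + μ • y ∈ Ω := hΩc hx hy (sub_nonneg.2 hμ.2) hμ.1 (sub_add_cancel 1 μ)
  have hgx : g x = F₁ σ := by simpa using hgxy 0 ⟨le_rfl, zero_le_one⟩
  have hgy : g y = F₁ τ := by simpa using hgxy 1 ⟨zero_le_one, le_rfl⟩
  have hfx : f x = σ := hF₁m.injOn (hfI hx) hσ ((hFf hx).trans hgx)
  have hfy : f y = τ := hF₁m.injOn (hfI hy) hτ ((hFf hy).trans hgy)
  refine ⟨f ((1 - μ) • x + μ • y), hfI hmid, (hFf hmid).trans (hgxy μ hμ), ?_⟩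
  simpa only [hfx, hfy] using hsub f hfI hf x hx y hy μ hμ

theorem exists_eq_combo_of_fConcaveOnR_iff (hΩo : IsOpen Ω) (hΩc : Convex ℝ Ω)
    (hIo : IsOpen I) (hIc : I.OrdConnected) (hF₁c : ContinuousOn F₁ I)
    (hF₁m : StrictMonoOn F₁ I) (hF₂c : ContinuousOn F₂ I) (hF₂m : StrictMonoOn F₂ I)
    (hiff : ∀ f, MapsTo f Ω I → (FConcaveOnR Ω F₁ f ↔ FConcaveOnR Ω F₂ f))
    {f₀ : EuclideanSpace ℝ (Fin N) → ℝ} (hf₀I : MapsTo f₀ Ω I) (hf₀ : FConcaveOnR Ω F₁ f₀)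
    {x₀ y₀ : EuclideanSpace ℝ (Fin N)} (hx₀ : x₀ ∈ Ω) (hy₀ : y₀ ∈ Ω) (hne : f₀ x₀ ≠ f₀ y₀)
    {σ τ : ℝ} (hσ : σ ∈ I) (hτ : τ ∈ I) (hστ : σ ≤ τ) {μ : ℝ} (hμ : μ ∈ Icc (0 : ℝ) 1) :
    ∃ ρ ∈ I, F₁ ρ = (1 - μ) * F₁ σ + μ * F₁ τ ∧ F₂ ρ = (1 - μ) * F₂ σ + μ * F₂ τ := by
  obtain ⟨ρ, hρ, hρ₁, hρ₂⟩ := exists_eq_combo_of_fConcaveOnR_subset hΩo hΩc hIo hIc hF₁c hF₁m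
    (fun f hf => (hiff f hf).1) hf₀I hf₀ hx₀ hy₀ hne hσ hτ hστ hμ
  obtain ⟨ρ', hρ', hρ'₂, hρ'₁⟩ := exists_eq_combo_of_fConcaveOnR_subset hΩo hΩc hIo hIc hF₂c
    hF₂m (fun f hf => (hiff f hf).2) hf₀I ((hiff f₀ hf₀I).1 hf₀) hx₀ hy₀ hne hσ hτ hστ hμ
  have hle : ρ ≤ ρ' := (hF₁m.le_iff_le hρ hρ').1 (hρ₁.trans_le hρ'₁)
  exact ⟨ρ, hρ, hρ₁, le_antisymm (hρ'₂ ▸ hF₂m.monotoneOn hρ hρ' hle) hρ₂⟩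

end FConcave

section Affine

variable {I : Set ℝ} {F₁ F₂ : ℝ → ℝ}

theorem sub_mul_sub_eq_of_combo (hF₁ : StrictMonoOn F₁ I)
    (hcombo : ∀ σ ∈ I, ∀ τ ∈ I, σ < τ → ∀ μ ∈ Icc (0 : ℝ) 1,
      ∃ ρ ∈ I, F₁ ρ = (1 - μ) * F₁ σ + μ * F₁ τ ∧ F₂ ρ = (1 - μ) * F₂ σ + μ * F₂ τ)
    {σ ρ τ : ℝ} (hσ : σ ∈ I) (hρ : ρ ∈ I) (hτ : τ ∈ I) (hσρ : σ < ρ) (hρτ : ρ < τ) :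
    (F₁ ρ - F₁ σ) * (F₂ τ - F₂ σ) = (F₁ τ - F₁ σ) * (F₂ ρ - F₂ σ) := by
  have h₁ := hF₁ hσ hρ hσρ
  have h₂ := hF₁ hρ hτ hρτ
  set μ := (F₁ ρ - F₁ σ) / (F₁ τ - F₁ σ)
  have hμ : μ * (F₁ τ - F₁ σ) = F₁ ρ - F₁ σ := div_mul_cancel₀ _ (by linarith)
  have hμI : μ ∈ Icc (0 : ℝ) 1 :=
    ⟨div_nonneg (by linarith) (by linarith), (div_le_one (by linarith)).2 (by linarith)⟩
  obtain ⟨ρ', hρ', hρ'₁, hρ'₂⟩ := hcombo σ hσ τ hτ (hσρ.trans hρτ) μ hμI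
  obtain rfl : ρ' = ρ := hF₁.injOn hρ' hρ (by linear_combination hρ'₁ + hμ)
  linear_combination -(F₂ τ - F₂ σ) * hμ - (F₁ τ - F₁ σ) * hρ'₂

theorem exists_eq_mul_add_of_combo (hF₁ : StrictMonoOn F₁ I) (hF₂ : StrictMonoOn F₂ I)
    (hcombo : ∀ σ ∈ I, ∀ τ ∈ I, σ < τ → ∀ μ ∈ Icc (0 : ℝ) 1,
      ∃ ρ ∈ I, F₁ ρ = (1 - μ) * F₁ σ + μ * F₁ τ ∧ F₂ ρ = (1 - μ) * F₂ σ + μ * F₂ τ)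
    {t₀ t₁ : ℝ} (ht₀ : t₀ ∈ I) (ht₁ : t₁ ∈ I) (ht : t₀ < t₁) :
    ∃ A B : ℝ, 0 < A ∧ ∀ τ ∈ I, F₁ τ = A * F₂ τ + B := by
  have hD₁ := sub_pos.2 (hF₁ ht₀ ht₁ ht)
  have hD₂ := sub_pos.2 (hF₂ ht₀ ht₁ ht)
  set A := (F₁ t₁ - F₁ t₀) / (F₂ t₁ - F₂ t₀)
  have hA : A * (F₂ t₁ - F₂ t₀) = F₁ t₁ - F₁ t₀ := div_mul_cancel₀ _ hD₂.ne'
  refine ⟨A, F₁ t₀ - A * F₂ t₀, div_pos hD₁ hD₂, fun τ hτ => ?_⟩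
  suffices h : (F₁ τ - F₁ t₀) * (F₂ t₁ - F₂ t₀) = (F₁ t₁ - F₁ t₀) * (F₂ τ - F₂ t₀) by
    apply mul_right_cancel₀ hD₂.ne'
    linear_combination h - (F₂ τ - F₂ t₀) * hA
  -- both sides are the same alternating function of `(t₀, τ, t₁)`: sort the three points
  rcases lt_trichotomy τ t₀ with h | rfl | h
  · linear_combination -sub_mul_sub_eq_of_combo hF₁ hcombo hτ ht₀ ht₁ h ht
  · ring
  rcases lt_trichotomy τ t₁ with h' | rfl | h'
  · linear_combination sub_mul_sub_eq_of_combo hF₁ hcombo ht₀ hτ ht₁ h h'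
  · ring
  · linear_combination -sub_mul_sub_eq_of_combo hF₁ hcombo ht₀ ht₁ hτ ht h'

end Affine

theorem stmt_3_general {N : ℕ} (Ω : Set (EuclideanSpace ℝ (Fin N)))
    (hΩopen : IsOpen Ω) (hΩconv : Convex ℝ Ω)
    (I : Set ℝ) (hIopen : IsOpen I) (hIconn : I.OrdConnected)
    (F₁ F₂ : ℝ → ℝ)
    (hF₁cont : ContinuousOn F₁ I) (hF₁mono : StrictMonoOn F₁ I)
    (hF₂cont : ContinuousOn F₂ I) (hF₂mono : StrictMonoOn F₂ I)
    (hnontriv : ∃ f : EuclideanSpace ℝ (Fin N) → ℝ,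
      (∀ x ∈ Ω, f x ∈ I) ∧ FConcaveOnR Ω F₁ f ∧ ∃ x ∈ Ω, ∃ y ∈ Ω, f x ≠ f y) :
    ({f : EuclideanSpace ℝ (Fin N) → ℝ | (∀ x ∈ Ω, f x ∈ I) ∧ FConcaveOnR Ω F₁ f} =
        {f : EuclideanSpace ℝ (Fin N) → ℝ | (∀ x ∈ Ω, f x ∈ I) ∧ FConcaveOnR Ω F₂ f}) ↔
      ∃ A B : ℝ, 0 < A ∧ ∀ τ ∈ I, F₁ τ = A * F₂ τ + B := by
  constructor
  · intro hset
    have hiff : ∀ f, MapsTo f Ω I → (FConcaveOnR Ω F₁ f ↔ FConcaveOnR Ω F₂ f) := fun f hf =>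
      ⟨fun h => ((Set.ext_iff.1 hset f).1 ⟨hf, h⟩).2,
        fun h => ((Set.ext_iff.1 hset f).2 ⟨hf, h⟩).2⟩
    obtain ⟨f₀, hf₀I, hf₀, x₀, hx₀, y₀, hy₀, hne⟩ := hnontriv
    have hcombo := fun σ hσ τ hτ (hστ : σ < τ) μ hμ =>
      exists_eq_combo_of_fConcaveOnR_iff hΩopen hΩconv hIopen hIconn hF₁cont hF₁mono hF₂cont
        hF₂mono hiff hf₀I hf₀ hx₀ hy₀ hne hσ hτ hστ.le (μ := μ) hμ
    rcases hne.lt_or_gt with h | h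
    · exact exists_eq_mul_add_of_combo hF₁mono hF₂mono hcombo (hf₀I x₀ hx₀) (hf₀I y₀ hy₀) h
    · exact exists_eq_mul_add_of_combo hF₁mono hF₂mono hcombo (hf₀I y₀ hy₀) (hf₀I x₀ hx₀) h
  · rintro ⟨A, B, hA, hF⟩
    have hF' : ∀ τ ∈ I, F₂ τ = A⁻¹ * F₁ τ + -(A⁻¹ * B) := fun τ hτ => by
      rw [hF τ hτ]; field_simp; ring
    ext f
    exact and_congr_right fun hfI =>
      ⟨.of_eq_mul_add hΩconv (inv_nonneg.2 hA.le) hF' hfI, .of_eq_mul_add hΩconv hA.le hF hfI⟩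

/-- Let `Ω` be a convex domain in `ℝ^N` and `F₁, F₂` admissible on an open interval `I` such
that `F₁`-concavity is nontrivial in `Ω`. Then `C_Ω[F₁] = C_Ω[F₂]` iff `F₁ = A F₂ + B` on `I`
for some `A > 0` and `B ∈ ℝ`. -/
theorem stmt_3 {N : ℕ} (Ω : Set (EuclideanSpace ℝ (Fin N)))
    (hΩopen : IsOpen Ω) (hΩconv : Convex ℝ Ω) (hΩne : Ω.Nonempty)
    (I : Set ℝ) (hIopen : IsOpen I) (hIconn : I.OrdConnected) (hIne : I.Nonempty)
    (F₁ F₂ : ℝ → ℝ)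
    (hF₁cont : ContinuousOn F₁ I) (hF₁mono : StrictMonoOn F₁ I)
    (hF₂cont : ContinuousOn F₂ I) (hF₂mono : StrictMonoOn F₂ I)
    (hnontriv : ∃ f : EuclideanSpace ℝ (Fin N) → ℝ,
      (∀ x ∈ Ω, f x ∈ I) ∧ FConcaveOnR Ω F₁ f ∧ ∃ x ∈ Ω, ∃ y ∈ Ω, f x ≠ f y) :
    ({f : EuclideanSpace ℝ (Fin N) → ℝ | (∀ x ∈ Ω, f x ∈ I) ∧ FConcaveOnR Ω F₁ f} =
        {f : EuclideanSpace ℝ (Fin N) → ℝ | (∀ x ∈ Ω, f x ∈ I) ∧ FConcaveOnR Ω F₂ f}) ↔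
      ∃ A B : ℝ, 0 < A ∧ ∀ τ ∈ I, F₁ τ = A * F₂ τ + B :=
  stmt_3_general Ω hΩopen hΩconv I hIopen hIconn F₁ F₂ hF₁cont hF₁mono hF₂cont hF₂mono hnontriv
end

section
/- Let F be admissible on [0,∞). If for every k > 0 the function [0,∞) ∋ s ↦ F(k·e^{−s²}) is concave on [0,∞), then the function H : ℝ → ℝ defined by H(t) := F(e^t) is concave on ℝ. -/
/-!
With `k = e^L`, `a = √(L - s)` and `b = √(L - t)` one has `k e^{-a²} = e^s` and `k e^{-b²} = e^t`,
while `L - ((1 - μ) a + μ b)² = (1 - μ) s + μ t + μ (1 - μ) (a - b)²`. So concavity of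
`x ↦ F(k e^{-x²})` bounds `(1 - μ) H(s) + μ H(t)` by `H` at a point exceeding `(1 - μ) s + μ t` by
`μ (1 - μ) (a - b)²`. Since `a - b = (t - s) / (a + b) → 0` as `L → ∞`, continuity of `F` at `e^m`,
`m = (1 - μ) s + μ t`, concludes.
-/

open Set
open Filter Topology Real

/-- An `EReal`-valued function `H` is concave on a convex set `S ⊆ ℝ`. -/
def ERealConcaveOn (S : Set ℝ) (H : ℝ → EReal) : Prop :=
  ∀ s ∈ S, ∀ t ∈ S, ∀ μ ∈ Set.Icc (0 : ℝ) 1,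
    ((1 - μ : ℝ) : EReal) * H s + ((μ : ℝ) : EReal) * H t ≤ H ((1 - μ) * s + μ * t)

theorem tendsto_sqrt_sub_sqrt_sub_atTop (s t : ℝ) :
    Tendsto (fun L => √(L - s) - √(L - t)) atTop (𝓝 0) := by
  have hsqrt (c : ℝ) : Tendsto (fun L => √(L - c)) atTop atTop :=
    tendsto_sqrt_atTop.comp (tendsto_atTop_add_const_right atTop (-c) tendsto_id)
  have hquot : Tendsto (fun L => (t - s) / (√(L - s) + √(L - t))) atTop (𝓝 0) :=
    tendsto_const_nhds.div_atTop ((hsqrt s).atTop_add_atTop (hsqrt t))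
  refine hquot.congr' ?_
  filter_upwards [eventually_gt_atTop (max s t)] with L hL
  have hs : 0 < L - s := sub_pos.2 (lt_of_le_of_lt (le_max_left s t) hL)
  have ht : 0 < L - t := sub_pos.2 (lt_of_le_of_lt (le_max_right s t) hL)
  have hpos : 0 < √(L - s) + √(L - t) := add_pos (sqrt_pos.2 hs) (sqrt_pos.2 ht)
  rw [div_eq_iff hpos.ne']
  linear_combination sq_sqrt ht.le - sq_sqrt hs.le

theorem convexComb_le_of_concaveOn_gaussian {F : ℝ → EReal}
    (hk : ∀ k > (0 : ℝ), ERealConcaveOn (Ici (0 : ℝ)) (fun x => F (k * exp (-x ^ 2))))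
    {s t L μ : ℝ} (hs : s ≤ L) (ht : t ≤ L) (hμ : μ ∈ Icc (0 : ℝ) 1) :
    ((1 - μ : ℝ) : EReal) * F (exp s) + ((μ : ℝ) : EReal) * F (exp t)
      ≤ F (exp ((1 - μ) * s + μ * t + μ * (1 - μ) * (√(L - s) - √(L - t)) ^ 2)) := by
  have hexp (c : ℝ) : exp L * exp (-c ^ 2) = exp (L - c ^ 2) := by rw [sub_eq_add_neg, exp_add]
  have ha := sq_sqrt (sub_nonneg.2 hs)
  have hb := sq_sqrt (sub_nonneg.2 ht)
  have h := hk (exp L) (exp_pos L) _ (sqrt_nonneg (L - s)) _ (sqrt_nonneg (L - t)) μ hμ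
  simp only [hexp] at h
  rw [ha, hb, sub_sub_cancel, sub_sub_cancel] at h
  refine h.trans_eq ?_
  congr 2
  linear_combination (μ - 1) * ha - μ * hb

theorem stmt_12_general (F : ℝ → EReal)
    (hFcont : ContinuousOn F (Ioi (0 : ℝ)))
    (hk : ∀ k > (0 : ℝ), ERealConcaveOn (Ici (0 : ℝ)) (fun s => F (k * Real.exp (-s ^ 2)))) :
    ERealConcaveOn univ (fun t => F (Real.exp t)) := by
  intro s _ t _ μ hμ
  set m := (1 - μ) * s + μ * t
  have hexponent : Tendsto (fun L => m + μ * (1 - μ) * (√(L - s) - √(L - t)) ^ 2) atTop (𝓝 m) := by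
    simpa using (((tendsto_sqrt_sub_sqrt_sub_atTop s t).pow 2).const_mul (μ * (1 - μ))).const_add m
  have hF : Tendsto (fun L => F (exp (m + μ * (1 - μ) * (√(L - s) - √(L - t)) ^ 2))) atTop
      (𝓝 (F (exp m))) :=
    (hFcont _ (exp_pos m)).tendsto.comp <| tendsto_nhdsWithin_iff.2
      ⟨(continuous_exp.tendsto m).comp hexponent, Eventually.of_forall fun _ => exp_pos _⟩
  refine ge_of_tendsto hF ?_
  filter_upwards [eventually_ge_atTop (max s t)] with L hL
  exact convexComb_le_of_concaveOn_gaussian hk (le_of_max_le_left hL) (le_of_max_le_right hL) hμ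

/-- Lemma 4.2 (converse direction): let `F` be admissible on `[0,∞)`. If for every `k > 0`
the function `s ↦ F(k e^{-s²})` is concave on `[0,∞)`, then `H(t) = F(e^t)` is concave on `ℝ`. -/
theorem stmt_12 (F : ℝ → EReal)
    (hFcont : ContinuousOn F (Ioi (0 : ℝ))) (hFmono : StrictMonoOn F (Ici (0 : ℝ)))
    (hk : ∀ k > (0 : ℝ), ERealConcaveOn (Ici (0 : ℝ)) (fun s => F (k * Real.exp (-s ^ 2)))) :
    ERealConcaveOn univ (fun t => F (Real.exp t)) :=
  stmt_12_general F hFcont hk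
end

section
/- Let Ω be a convex domain in ℝ^N, let a > 0, and let F be admissible on [0,a] such that F-concavity is nontrivial in Ω. Assume the function [0,∞) ∋ s ↦ F(a·e^{−s²}) is concave. Then lim_{τ→0+} F(τ) = −∞, and for every L_{1/2}-concave function f : Ω → [0,1], the function a·f is F-concave in Ω. -/
open Set Filter

/-- `L_{1/2}(τ) = -2(√(-log τ) - 1)` on `(0,1]`, with `L_{1/2}(τ) = -∞` for `τ ≤ 0`. -/
noncomputable def Lhalf (τ : ℝ) : EReal :=
  if τ ≤ 0 then ⊥ else (((-2) * (Real.sqrt (-Real.log τ) - 1) : ℝ) : EReal)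

set_option maxHeartbeats 2000000 in
/-- Lemma 4.3: let `Ω` be a convex domain in `ℝ^N`, `a > 0`, and `F` admissible on `[0,a]` with
`F`-concavity nontrivial in `Ω`. If `s ↦ F(a e^{-s²})` is concave on `[0,∞)`, then
`lim_{τ → 0+} F(τ) = -∞` and, for every `L_{1/2}`-concave `f : Ω → [0,1]`, the function `a f`
is `F`-concave in `Ω`. -/
theorem stmt_15 {N : ℕ} (Ω : Set (EuclideanSpace ℝ (Fin N)))
    (hΩopen : IsOpen Ω) (hΩconv : Convex ℝ Ω) (hΩne : Ω.Nonempty)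
    (a : ℝ) (ha : 0 < a)
    (F : ℝ → EReal)
    (hFcont : ContinuousOn F (Ioo (0 : ℝ) a)) (hFmono : StrictMonoOn F (Icc (0 : ℝ) a))
    (hnontriv : ∃ f : EuclideanSpace ℝ (Fin N) → ℝ,
      (∀ x ∈ Ω, f x ∈ Icc (0 : ℝ) a) ∧ FConcaveOn Ω F f ∧ ∃ x ∈ Ω, ∃ y ∈ Ω, f x ≠ f y)
    (hconc : ERealConcaveOn (Ici (0 : ℝ)) (fun s => F (a * Real.exp (-s ^ 2)))) :
    Tendsto F (nhdsWithin (0 : ℝ) (Ioi 0)) (nhds (⊥ : EReal)) ∧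
    ∀ f : EuclideanSpace ℝ (Fin N) → ℝ, (∀ x ∈ Ω, f x ∈ Icc (0 : ℝ) 1) →
      FConcaveOn Ω Lhalf f → FConcaveOn Ω F (fun x => a * f x) := by
  -- F is real on (0,a)
  have hFr : ∀ τ ∈ Ioo (0:ℝ) a, F τ = (((F τ).toReal : ℝ) : EReal) := by
    intro τ hτ
    have h1 : F 0 < F τ := hFmono ⟨le_refl 0, ha.le⟩ ⟨hτ.1.le, hτ.2.le⟩ hτ.1
    have h2 : F τ < F a := hFmono ⟨hτ.1.le, hτ.2.le⟩ ⟨ha.le, le_refl a⟩ hτ.2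
    exact (EReal.coe_toReal (h2.trans_le le_top).ne (lt_of_le_of_lt bot_le h1).ne').symm
  set Hr : ℝ → ℝ := fun s => (F (a * Real.exp (-s^2))).toReal with hHrdef
  have hmem : ∀ s : ℝ, 0 < s → a * Real.exp (-s^2) ∈ Ioo (0:ℝ) a := by
    intro s hs
    constructor
    · positivity
    · nlinarith [Real.exp_lt_one_iff.mpr (by nlinarith : -s^2 < 0)]
  have hFs : ∀ s : ℝ, 0 < s → F (a * Real.exp (-s^2)) = ((Hr s : ℝ) : EReal) := by
    intro s hs; exact hFr _ (hmem s hs)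
  -- the linear upper bound from concavity
  have hb : ∀ s : ℝ, 2 ≤ s → Hr s ≤ Hr 1 + (s-1) * (Hr 2 - Hr 1) := by
    intro s hs
    set μ : ℝ := 1/(s-1) with hμdef
    have hs1 : (0:ℝ) < s - 1 := by linarith
    have hμ1 : μ * (s-1) = 1 := by rw [hμdef]; field_simp
    have hμmem : μ ∈ Icc (0:ℝ) 1 := by
      constructor
      · positivity
      · rw [hμdef, div_le_one hs1]; linarith
    have hcomb : (1-μ) * 1 + μ * s = 2 := by
      rw [hμdef]; field_simp; ring
    have h := hconc 1 (by norm_num) s (mem_Ici.mpr (by linarith)) μ hμmem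
    rw [show ((1-μ)*1+μ*s : ℝ) = 2 from hcomb] at h
    beta_reduce at h
    rw [hFs 1 one_pos, hFs s (by linarith), hFs 2 two_pos] at h
    rw [← EReal.coe_mul, ← EReal.coe_mul, ← EReal.coe_add, EReal.coe_le_coe_iff] at h
    have h3 := mul_le_mul_of_nonneg_left h hs1.le
    have hμ1' : (s-1) * μ = 1 := by rw [hμdef]; field_simp
    have e : (s-1)*((1-μ)*Hr 1 + μ*Hr s) = (s-2)*Hr 1 + Hr s := by
      linear_combination (Hr s - Hr 1) * hμ1'
    nlinarith [h3, e]
  -- strict decrease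
  have hd0 : Hr 2 < Hr 1 := by
    have hlt : F (a * Real.exp (-(2:ℝ)^2)) < F (a * Real.exp (-(1:ℝ)^2)) := by
      apply hFmono (Ioo_subset_Icc_self (hmem 2 two_pos)) (Ioo_subset_Icc_self (hmem 1 one_pos))
      have : Real.exp (-(2:ℝ)^2) < Real.exp (-(1:ℝ)^2) := Real.exp_lt_exp.mpr (by norm_num)
      nlinarith
    rw [hFs 2 two_pos, hFs 1 one_pos, EReal.coe_lt_coe_iff] at hlt
    exact hlt
  set d : ℝ := Hr 1 - Hr 2 with hddef
  have hdpos : 0 < d := by simp [hddef]; linarith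
  -- the limit
  have hlim : Tendsto F (nhdsWithin (0 : ℝ) (Ioi 0)) (nhds (⊥ : EReal)) := by
    rw [EReal.tendsto_nhds_bot_iff_real]
    intro M
    set S : ℝ := max 2 (1 + (Hr 1 - M + 1)/d) with hSdef
    have hS2 : (2:ℝ) ≤ S := le_max_left _ _
    have hSpos : (0:ℝ) < S := by linarith
    have hδpos : 0 < a * Real.exp (-S^2) := by positivity
    filter_upwards [Ioo_mem_nhdsGT_of_mem ⟨le_refl (0:ℝ), hδpos⟩] with τ hτ
    have hτ0 : 0 < τ := hτ.1
    have hfrac : Real.exp (S^2) < a / τ := by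
      rw [lt_div_iff₀ hτ0]
      have h1 : τ * Real.exp (S^2) < (a * Real.exp (-S^2)) * Real.exp (S^2) :=
        mul_lt_mul_of_pos_right hτ.2 (Real.exp_pos _)
      have h2 : (a * Real.exp (-S^2)) * Real.exp (S^2) = a := by
        rw [mul_assoc, ← Real.exp_add]; simp
      linarith [h1, h2.le, h2.ge]
    have hlog : S^2 < Real.log (a/τ) := by
      have := Real.log_lt_log (Real.exp_pos _) hfrac
      rwa [Real.log_exp] at this
    set s : ℝ := Real.sqrt (Real.log (a/τ)) with hsdef
    have hsS : S < s := by
      have h1 : Real.sqrt (S^2) < Real.sqrt (Real.log (a/τ)) :=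
        Real.sqrt_lt_sqrt (sq_nonneg _) hlog
      rwa [Real.sqrt_sq hSpos.le] at h1
    have hs2 : (2:ℝ) ≤ s := by linarith
    have hτeq : a * Real.exp (-s^2) = τ := by
      rw [hsdef, Real.sq_sqrt (by nlinarith [hlog, sq_nonneg S] : 0 ≤ Real.log (a/τ))]
      rw [Real.exp_neg, Real.exp_log (by positivity)]
      field_simp
    have hFτ : F τ = ((Hr s : ℝ) : EReal) := by
      rw [← hτeq]; exact hFs s (by linarith)
    have hbound : Hr s < M := by
      have h1 := hb s hs2
      have h2 : (Hr 1 - M + 1)/d < s - 1 := by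
        have : 1 + (Hr 1 - M + 1)/d ≤ S := le_max_right _ _
        linarith
      have h3 : Hr 1 - M + 1 < (s-1) * d := by
        have := (div_lt_iff₀ hdpos).mp h2
        linarith
      have h4 : (s-1) * (Hr 2 - Hr 1) = -((s-1)*d) := by rw [hddef]; ring
      linarith [h1, h4.le, h4.ge]
    rw [hFτ]
    exact_mod_cast EReal.coe_lt_coe_iff.mpr hbound
  -- F 0 = ⊥
  have hF0 : F 0 = ⊥ := by
    by_contra h
    obtain ⟨r, -, hr2⟩ := EReal.lt_iff_exists_real_btwn.mp (bot_lt_iff_ne_bot.mpr h)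
    have hev := (EReal.tendsto_nhds_bot_iff_real.mp hlim r).and
      (Ioo_mem_nhdsGT_of_mem ⟨le_refl (0:ℝ), ha⟩)
    obtain ⟨τ, hτr, hτi⟩ := hev.exists
    have : F 0 < F τ := hFmono ⟨le_refl 0, ha.le⟩ ⟨hτi.1.le, hτi.2.le⟩ hτi.1
    exact absurd (hr2.trans (this.trans hτr)) (lt_irrefl _)
  refine ⟨hlim, ?_⟩
  -- Part 2
  intro f hf hLf x hx y hy μ hμ
  by_cases hμ0 : μ = 0
  · subst hμ0
    simp only [sub_zero, one_smul, zero_smul, add_zero, EReal.coe_one, one_mul,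
      EReal.coe_zero, zero_mul]
    exact le_refl _
  by_cases hμ1 : μ = 1
  · subst hμ1
    simp only [sub_self, zero_smul, one_smul, zero_add, EReal.coe_one, one_mul,
      EReal.coe_zero, zero_mul]
    exact le_refl _
  have hμpos : 0 < μ := lt_of_le_of_ne hμ.1 (Ne.symm hμ0)
  have hμlt : μ < 1 := lt_of_le_of_ne hμ.2 hμ1
  set z := (1-μ) • x + μ • y with hzdef
  have hz : z ∈ Ω := hΩconv hx hy (by linarith) hμ.1 (by ring)
  have hfx := hf x hx
  have hfy := hf y hy
  have hfz := hf z hz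
  by_cases hx0 : f x ≤ 0
  · have : f x = 0 := le_antisymm hx0 hfx.1
    simp only [this, mul_zero, hF0]
    rw [EReal.coe_mul_bot_of_pos (by linarith : (0:ℝ) < 1 - μ), EReal.bot_add]
    exact bot_le
  by_cases hy0 : f y ≤ 0
  · have : f y = 0 := le_antisymm hy0 hfy.1
    simp only [this, mul_zero, hF0]
    rw [EReal.coe_mul_bot_of_pos (by exact_mod_cast hμpos), EReal.add_bot]
    exact bot_le
  push_neg at hx0 hy0
  set sx : ℝ := Real.sqrt (-Real.log (f x)) with hsxdef
  set sy : ℝ := Real.sqrt (-Real.log (f y)) with hsydef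
  have hsx0 : 0 ≤ sx := Real.sqrt_nonneg _
  have hsy0 : 0 ≤ sy := Real.sqrt_nonneg _
  have hlogx : 0 ≤ -Real.log (f x) := neg_nonneg.mpr (Real.log_nonpos hx0.le hfx.2)
  have hlogy : 0 ≤ -Real.log (f y) := neg_nonneg.mpr (Real.log_nonpos hy0.le hfy.2)
  have hex : a * Real.exp (-sx^2) = a * f x := by
    rw [hsxdef, Real.sq_sqrt hlogx, neg_neg, Real.exp_log hx0]
  have hey : a * Real.exp (-sy^2) = a * f y := by
    rw [hsydef, Real.sq_sqrt hlogy, neg_neg, Real.exp_log hy0]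
  -- L_{1/2}-concavity inequality
  have hL := hLf x hx y hy μ hμ
  rw [← hzdef] at hL
  simp only [Lhalf, if_neg (not_le.mpr hx0), if_neg (not_le.mpr hy0), ← hsxdef, ← hsydef] at hL
  rw [← EReal.coe_mul, ← EReal.coe_mul, ← EReal.coe_add] at hL
  have hz0 : 0 < f z := by
    by_contra h
    push_neg at h
    rw [if_pos h] at hL
    exact (EReal.bot_lt_coe _).not_ge hL
  rw [if_neg (not_le.mpr hz0), EReal.coe_le_coe_iff] at hL
  set sz : ℝ := Real.sqrt (-Real.log (f z)) with hszdef
  have hsz0 : 0 ≤ sz := Real.sqrt_nonneg _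
  have hlogz : 0 ≤ -Real.log (f z) := neg_nonneg.mpr (Real.log_nonpos hz0.le hfz.2)
  have hez : a * Real.exp (-sz^2) = a * f z := by
    rw [hszdef, Real.sq_sqrt hlogz, neg_neg, Real.exp_log hz0]
  have hsz : sz ≤ (1-μ) * sx + μ * sy := by nlinarith [hL]
  -- concavity of H
  have hH := hconc sx (mem_Ici.mpr hsx0) sy (mem_Ici.mpr hsy0) μ hμ
  simp only [hex, hey] at hH
  -- monotonicity
  set u : ℝ := (1-μ) * sx + μ * sy with hudef
  have hu0 : 0 ≤ u := by
    apply add_nonneg (mul_nonneg (by linarith) hsx0) (mul_nonneg hμ.1 hsy0)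
  have hmono : F (a * Real.exp (-u^2)) ≤ F (a * Real.exp (-sz^2)) := by
    apply hFmono.monotoneOn
    · constructor
      · positivity
      · nlinarith [Real.exp_le_one_iff.mpr (by nlinarith : -u^2 ≤ 0), ha.le]
    · constructor
      · positivity
      · nlinarith [Real.exp_le_one_iff.mpr (by nlinarith : -sz^2 ≤ 0), ha.le]
    · have hsq : sz^2 ≤ u^2 := by nlinarith
      have := Real.exp_le_exp.mpr (by linarith : -u^2 ≤ -sz^2)
      nlinarith [this]
  calc ((1 - μ : ℝ) : EReal) * F (a * f x) + ((μ : ℝ) : EReal) * F (a * f y)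
      ≤ F (a * Real.exp (-u^2)) := hH
    _ ≤ F (a * Real.exp (-sz^2)) := hmono
    _ = F (a * f z) := by rw [hez]
end

section
/- For N ≥ 1, t > 0 and x ∈ ℝ^N, define u(x,t) := (4πt)^{−N/2} ∫_{B(0,1)} e^{−|x−y|²/(4t)} dy, where B(0,1) is the open unit ball of ℝ^N. Then for every L > 0, lim_{t→∞} sup_{|x| ≤ L√t} | (4πt)^{N/2}·|B(0,1)|^{−1}·u(x,t) − e^{−|x|²/(4t)} | = 0, where |B(0,1)| denotes the Lebesgue measure of B(0,1). -/
/-!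
After cancelling the powers of `4πt`, the quantity is the average over the unit ball of
`exp (-‖x - y‖² / (4t))` minus `exp (-‖x‖² / (4t))`. Since `exp` is `1`-Lipschitz on `(-∞, 0]`
and `|‖x - y‖² - ‖x‖²| ≤ 2‖x‖ + 1` for `‖y‖ ≤ 1`, the integrand differs from the constant by at most
`(2‖x‖ + 1) / (4t) ≤ (2L + 1) / (4√t)` when `‖x‖ ≤ L√t` and `t ≥ 1`.
-/

open Set Filter MeasureTheory

lemma abs_exp_neg_sub_exp_neg_le {a b : ℝ} (ha : 0 ≤ a) (hb : 0 ≤ b) :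
    |Real.exp (-a) - Real.exp (-b)| ≤ |a - b| := by
  wlog hab : a ≤ b generalizing a b
  · rw [abs_sub_comm, abs_sub_comm a]
    exact this hb ha (le_of_not_ge hab)
  have hexp : Real.exp (-b) = Real.exp (-a) * Real.exp (a - b) := by
    rw [← Real.exp_add]; ring_nf
  have h_le_one : Real.exp (-a) ≤ 1 := Real.exp_le_one_iff.mpr (by linarith)
  have h_lower : a - b + 1 ≤ Real.exp (a - b) := Real.add_one_le_exp _
  have h_upper : Real.exp (a - b) ≤ 1 := Real.exp_le_one_iff.mpr (by linarith)
  rw [abs_of_nonneg (by rw [hexp]; nlinarith [Real.exp_pos (-a)]), abs_of_nonpos (by linarith),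
    hexp]
  nlinarith [Real.exp_pos (-a)]

lemma abs_norm_sub_sq_sub_norm_sq_le {E : Type*} [SeminormedAddCommGroup E] (x y : E) :
    |‖x - y‖ ^ 2 - ‖x‖ ^ 2| ≤ (2 * ‖x‖ + ‖y‖) * ‖y‖ := by
  have hdiff : |‖x - y‖ - ‖x‖| ≤ ‖y‖ := by
    simpa using abs_norm_sub_norm_le (x - y) x
  have hsum : |‖x - y‖ + ‖x‖| ≤ 2 * ‖x‖ + ‖y‖ := by
    rw [abs_of_nonneg (by positivity)]
    linarith [norm_sub_le x y]
  rw [sq_sub_sq, abs_mul]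
  exact mul_le_mul hsum hdiff (abs_nonneg _) (by positivity)

lemma norm_setAverage_sub_le {α E : Type*} [MeasurableSpace α] [NormedAddCommGroup E]
    [NormedSpace ℝ E] [CompleteSpace E] {μ : Measure α} {s : Set α} (hs₀ : μ s ≠ 0)
    (hs : μ s ≠ ⊤) {f : α → E} (hf : IntegrableOn f s μ) {c : E} {C : ℝ}
    (hC : ∀ y ∈ s, ‖f y - c‖ ≤ C) :
    ‖(⨍ y in s, f y ∂μ) - c‖ ≤ C := by
  have hμs : 0 < μ.real s := ENNReal.toReal_pos hs₀ hs
  have hsub : (⨍ y in s, f y ∂μ) - c = (μ.real s)⁻¹ • ∫ y in s, (f y - c) ∂μ := by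
    rw [integral_sub hf (integrableOn_const hs), setIntegral_const, smul_sub,
      inv_smul_smul₀ hμs.ne', setAverage_eq]
  calc ‖(⨍ y in s, f y ∂μ) - c‖
      = (μ.real s)⁻¹ * ‖∫ y in s, (f y - c) ∂μ‖ := by
        rw [hsub, norm_smul, Real.norm_of_nonneg (inv_nonneg.mpr hμs.le)]
    _ ≤ (μ.real s)⁻¹ * (C * μ.real s) := by
        gcongr
        exact norm_setIntegral_le_of_norm_le_const hs.lt_top hC
    _ = C := by field_simp

lemma abs_setAverage_gaussian_sub_le {E : Type*} [NormedAddCommGroup E] [MeasurableSpace E]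
    [OpensMeasurableSpace E] {μ : Measure E} {s : Set E} (hs₀ : μ s ≠ 0) (hs : μ s ≠ ⊤)
    {R : ℝ} (hR : ∀ y ∈ s, ‖y‖ ≤ R) {t : ℝ} (ht : 0 < t) (x : E) :
    |(⨍ y in s, Real.exp (-‖x - y‖ ^ 2 / (4 * t)) ∂μ) - Real.exp (-‖x‖ ^ 2 / (4 * t))| ≤
      (2 * ‖x‖ + R) * R / (4 * t) := by
  have hint : IntegrableOn (fun y => Real.exp (-‖x - y‖ ^ 2 / (4 * t))) s μ := by
    refine Measure.integrableOn_of_bounded (M := 1) hs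
      (Continuous.aestronglyMeasurable (by fun_prop)) (ae_of_all _ fun y => ?_)
    rw [Real.norm_of_nonneg (Real.exp_nonneg _), Real.exp_le_one_iff, neg_div, neg_nonpos]
    positivity
  refine norm_setAverage_sub_le hs₀ hs hint fun y hy => ?_
  rw [Real.norm_eq_abs, neg_div, neg_div]
  refine (abs_exp_neg_sub_exp_neg_le (by positivity) (by positivity)).trans ?_
  rw [← sub_div, abs_div, abs_of_pos (by positivity : (0 : ℝ) < 4 * t)]
  gcongr
  refine (abs_norm_sub_sq_sub_norm_sq_le x y).trans ?_
  have hyR := hR y hy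
  exact mul_le_mul (by linarith) hyR (norm_nonneg y) (by linarith [norm_nonneg x, norm_nonneg y])

theorem stmt_16_general (N : ℕ) (L : ℝ) (hL : 0 < L) :
    Tendsto (fun t : ℝ =>
      sSup ((fun x : EuclideanSpace ℝ (Fin N) =>
        |(4 * Real.pi * t) ^ ((N : ℝ) / 2) *
            ((volume (Metric.ball (0 : EuclideanSpace ℝ (Fin N)) 1)).toReal)⁻¹ *
            ((4 * Real.pi * t) ^ (-(N : ℝ) / 2) *
              ∫ y in Metric.ball (0 : EuclideanSpace ℝ (Fin N)) 1,
                Real.exp (-‖x - y‖ ^ 2 / (4 * t))) -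
          Real.exp (-‖x‖ ^ 2 / (4 * t))|) ''
        {x : EuclideanSpace ℝ (Fin N) | ‖x‖ ≤ L * Real.sqrt t}))
      atTop (nhds 0) := by
  have hbound : Tendsto (fun t : ℝ => (2 * L + 1) / (4 * Real.sqrt t)) atTop (nhds 0) :=
    tendsto_const_nhds.div_atTop (Real.tendsto_sqrt_atTop.const_mul_atTop (by norm_num))
  refine tendsto_of_tendsto_of_tendsto_of_le_of_le' tendsto_const_nhds hbound
    (Eventually.of_forall fun t => Real.sSup_nonneg (by rintro _ ⟨x, -, rfl⟩; positivity)) ?_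
  filter_upwards [eventually_ge_atTop 1] with t ht
  have ht₀ : 0 < t := by linarith
  have hsqrt : 1 ≤ Real.sqrt t := Real.one_le_sqrt.mpr ht
  refine Real.sSup_le ?_ (by positivity)
  rintro _ ⟨x, hx : ‖x‖ ≤ L * Real.sqrt t, rfl⟩
  have hpow : (4 * Real.pi * t) ^ ((N : ℝ) / 2) * (4 * Real.pi * t) ^ (-(N : ℝ) / 2) = 1 := by
    rw [neg_div, Real.rpow_neg (by positivity), mul_inv_cancel₀ (by positivity)]
  have hball := abs_setAverage_gaussian_sub_le (μ := volume)
    (Metric.measure_ball_pos volume (0 : EuclideanSpace ℝ (Fin N)) one_pos).ne'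
    measure_ball_lt_top.ne (fun y hy => (mem_ball_zero_iff.mp hy).le) ht₀ x
  rw [setAverage_eq, smul_eq_mul, measureReal_def] at hball
  dsimp only
  rw [mul_mul_mul_comm, hpow, one_mul]
  refine hball.trans ?_
  rw [mul_one, div_le_div_iff₀ (by positivity) (by positivity)]
  nlinarith [Real.mul_self_sqrt ht₀.le]

/-- For `N ≥ 1`, let `u(x,t) = (4πt)^{-N/2} ∫_{B(0,1)} e^{-|x-y|²/(4t)} dy` be the solution of
the heat equation in `ℝ^N` with initial datum `χ_{B(0,1)}`. Then for every `L > 0`,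
`lim_{t → ∞} sup_{|x| ≤ L√t} |(4πt)^{N/2} |B(0,1)|^{-1} u(x,t) - e^{-|x|²/(4t)}| = 0`. -/
theorem stmt_16 (N : ℕ) (hN : 1 ≤ N) (L : ℝ) (hL : 0 < L) :
    Tendsto (fun t : ℝ =>
      sSup ((fun x : EuclideanSpace ℝ (Fin N) =>
        |(4 * Real.pi * t) ^ ((N : ℝ) / 2) *
            ((volume (Metric.ball (0 : EuclideanSpace ℝ (Fin N)) 1)).toReal)⁻¹ *
            ((4 * Real.pi * t) ^ (-(N : ℝ) / 2) *
              ∫ y in Metric.ball (0 : EuclideanSpace ℝ (Fin N)) 1,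
                Real.exp (-‖x - y‖ ^ 2 / (4 * t))) -
          Real.exp (-‖x‖ ^ 2 / (4 * t))|) ''
        {x : EuclideanSpace ℝ (Fin N) | ‖x‖ ≤ L * Real.sqrt t}))
      atTop (nhds 0) :=
  stmt_16_general N L hL
end
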